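/- AbC does not preserve monotonicity. Concretely, for A = {a,b,c,d} and F = {f_p, f_v}, there exists k_1 ∈ ℤ_+ such that for all k ≥ k_1: the profile σ consisting of k voters ranking a≻b≻c≻d, 2k voters ranking d≻c≻a≻b, k voters ranking b≻a≻c≻d, 3k voters ranking c≻a≻b≻d, and 3k voters ranking d≻b≻a≻c satisfies AbC(F,σ) = {f_v}, hence f_{AbC}^F(σ) = (a ≻ b ≻ c ≻ d); while the profile σ', obtained from σ by the k voters ranking a≻b≻c≻d and k of the voters ranking d≻c≻a≻b each raising b by one position, satisfies AbC(F,σ') = {f_p}, hence f_{AbC}^F(σ') = (d ≻ c ≻ b ≻ a). Thus promoting b strictly increases its rank in the induced output (from 2 to 3), violating monotonicity even though f_p and f_v are both monotonic. -/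

import Mathlib

/-!
Plurality and veto are monotonic because raising `a` can only increase its score and decrease
everyone else's. On `σ` the veto scores are `10k, 8k, 7k, 5k` while plurality ties `a` and `b`
at `k`; on `σ'` the plurality scores are `0, 2k, 3k, 5k` while veto ties `a` and `b` at `9k`.

A rule whose total scores are pairwise `δ` apart disagrees with itself across a random split by an
expected Kendall-Tau distance of only `O(n / δ²)`: by Chebyshev's inequality for the score gap of
a pair, at most that fraction of the splits fails to order the pair correctly on both sides. A
rule with an exact tie between two alternatives separated by some voter orders them strictly
oppositely on the two sides for at least half of the splits (moving that voter to the other side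
breaks a tie of the side totals), so its expected distance is at least `1/2`. Hence for large `k`
AbC picks veto on `σ` and plurality on `σ'`, and raising `b` moves it from second to third place.
-/

open scoped Classical

noncomputable section

/-- A strict ranking of the alternatives `A` among `m` positions: each alternative is
assigned its (0-indexed) position. -/
abbrev Ranking (A : Type*) (m : ℕ) := A ≃ Fin m

/-- A weak ranking: a complete and transitive binary relation (ties allowed).
`ge a b` means `a` is ranked weakly above `b`. -/
structure WeakRanking (A : Type*) where
  ge : A → A → Prop
  total : ∀ a b, ge a b ∨ ge b a
  trans : ∀ a b c, ge a b → ge b c → ge a c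

namespace WeakRanking

variable {A : Type*}

/-- `a` is ranked strictly above `b`. -/
def strict (r : WeakRanking A) (a b : A) : Prop := r.ge a b ∧ ¬ r.ge b a

/-- `a` and `b` are tied. -/
def tied (r : WeakRanking A) (a b : A) : Prop := r.ge a b ∧ r.ge b a

/-- The reversed weak ranking. -/
def rev (r : WeakRanking A) : WeakRanking A where
  ge a b := r.ge b a
  total a b := r.total b a
  trans _ _ _ h1 h2 := r.trans _ _ _ h2 h1

/-- The all-tied weak ranking. -/
def allTied (A : Type*) : WeakRanking A :=
  ⟨fun _ _ => True, fun _ _ => Or.inl trivial, fun _ _ _ _ _ => trivial⟩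

end WeakRanking

variable {A : Type*} {m : ℕ}

/-- The weak ranking induced by a strict ranking (smaller position = ranked higher). -/
def Ranking.toWeak (r : Ranking A m) : WeakRanking A where
  ge a b := r a ≤ r b
  total a b := le_total _ _
  trans _ _ _ h1 h2 := le_trans h1 h2

/-- The position-reversal permutation. -/
def finRevPerm (m : ℕ) : Equiv.Perm (Fin m) :=
  ⟨Fin.rev, Fin.rev, Fin.rev_rev, Fin.rev_rev⟩

/-- The reversed strict ranking. -/
def Ranking.revR (r : Ranking A m) : Ranking A m := r.trans (finRevPerm m)

/-- Kendall-Tau distance with ties between two weak rankings: the sum over unordered pairs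
of distinct alternatives of `D + T/2`, realized as half the sum over ordered pairs. -/
def KT [Fintype A] (r1 r2 : WeakRanking A) : ℝ :=
  (∑ p ∈ Finset.univ.offDiag,
      ((if (r1.strict p.1 p.2 ∧ r2.strict p.2 p.1) ∨ (r1.strict p.2 p.1 ∧ r2.strict p.1 p.2)
          then (1 : ℝ) else 0)
        + (if r1.tied p.1 p.2 ∨ r2.tied p.1 p.2 then (1 : ℝ) else 0) / 2)) / 2

/-- A profile: the list of the voters' strict rankings. -/
abbrev Profile (A : Type*) (m : ℕ) := List (Ranking A m)

/-- A social welfare function. -/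
abbrev SWF (A : Type*) (m : ℕ) := Profile A m → WeakRanking A

/-- Reverse every voter's ranking. -/
def revProfile (σ : Profile A m) : Profile A m := σ.map Ranking.revR

/-- A monotone positional scoring vector `1 = s₁ ≥ s₂ ≥ … ≥ sₘ = 0`. -/
structure ScoreVec (m : ℕ) where
  s : Fin m → ℝ
  anti : Antitone s
  first : ∀ h : 0 < m, s ⟨0, h⟩ = 1
  last : ∀ h : 0 < m, s ⟨m - 1, Nat.sub_lt h Nat.one_pos⟩ = 0

/-- Total score of alternative `a` in profile `σ`. -/
def totalScore (sv : ScoreVec m) (σ : Profile A m) (a : A) : ℝ :=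
  (σ.map fun r => sv.s (r a)).sum

/-- The positional scoring rule associated to a scoring vector. -/
def posSWF (sv : ScoreVec m) : SWF A m := fun σ =>
  { ge := fun a b => totalScore sv σ b ≤ totalScore sv σ a
    total := fun _ _ => le_total _ _
    trans := fun _ _ _ h1 h2 => le_trans h2 h1 }

/-- The plurality scoring vector `(1,0,…,0)`. -/
def pluralityVec (m : ℕ) (hm : 2 ≤ m) : ScoreVec m where
  s i := if i.val = 0 then 1 else 0
  anti := by
    intro i j hij
    have h' : i.val ≤ j.val := hij
    dsimp only
    by_cases hj : j.val = 0
    · have hi : i.val = 0 := by omega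
      simp [hi, hj]
    · by_cases hi : i.val = 0 <;> simp [hi, hj]
  first h := by simp
  last h := by
    have h' : m - 1 ≠ 0 := by omega
    simp [h']

/-- The veto scoring vector `(1,…,1,0)`. -/
def vetoVec (m : ℕ) (hm : 2 ≤ m) : ScoreVec m where
  s i := if i.val = m - 1 then 0 else 1
  anti := by
    intro i j hij
    have h' : i.val ≤ j.val := hij
    dsimp only
    by_cases hi : i.val = m - 1
    · have hj : j.val = m - 1 := by have := j.isLt; omega
      simp [hi, hj]
    · by_cases hj : j.val = m - 1 <;> simp [hi, hj]
  first h := by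
    have h' : (0 : ℕ) ≠ m - 1 := by omega
    simp [h']
  last h := by simp

/-- The reverse scoring vector, `s'_j = 1 - s_{m+1-j}`. -/
def ScoreVec.revVec (sv : ScoreVec m) : ScoreVec m where
  s j := 1 - sv.s j.rev
  anti := by
    intro i j hij
    have h1 : j.rev ≤ i.rev := by
      simp only [Fin.le_def, Fin.val_rev]
      have h' : i.val ≤ j.val := hij
      omega
    have h2 := sv.anti h1
    dsimp only
    linarith
  first h := by
    have h1 : (⟨0, h⟩ : Fin m).rev = ⟨m - 1, Nat.sub_lt h Nat.one_pos⟩ := by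
      ext
      simp [Fin.val_rev]
    try dsimp only
    rw [h1, sv.last h]
    ring
  last h := by
    have h1 : (⟨m - 1, Nat.sub_lt h Nat.one_pos⟩ : Fin m).rev = ⟨0, h⟩ := by
      ext
      simp only [Fin.val_rev]
      omega
    try dsimp only
    rw [h1, sv.first h]
    ring

/-- One side of the split of the profile `σ` given by assignment `β`. -/
def subProfile (σ : Profile A m) (β : Fin σ.length → Bool) (b : Bool) : Profile A m :=
  ((List.finRange σ.length).filter fun i => β i == b).map σ.get

/-- Apply an SWF, producing the all-tied ranking on an empty (sub)profile. -/
def applySplit (f : SWF A m) (σ : Profile A m) : WeakRanking A :=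
  if σ = [] then WeakRanking.allTied A else f σ

/-- Expected Kendall-Tau disagreement of `f` between the two sides of a uniformly random
split of `σ` (each voter placed independently and uniformly on one of the two sides). -/
def expDisagree [Fintype A] (f : SWF A m) (σ : Profile A m) : ℝ :=
  (∑ β : Fin σ.length → Bool,
      KT (applySplit f (subProfile σ β true)) (applySplit f (subProfile σ β false)))
    / 2 ^ σ.length

/-- Aggregation by Consistency over a set of SWFs: the rules minimizing expected
disagreement across a random split. -/
def AbC [Fintype A] (F : Set (SWF A m)) (σ : Profile A m) : Set (SWF A m) :=
  {f | f ∈ F ∧ ∀ g ∈ F, expDisagree f σ ≤ expDisagree g σ}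

/-- Aggregation by Consistency over a set of positional scoring vectors. -/
def AbCVec [Fintype A] (F : Set (ScoreVec m)) (σ : Profile A m) : Set (ScoreVec m) :=
  {sv | sv ∈ F ∧ ∀ sv' ∈ F, expDisagree (posSWF sv) σ ≤ expDisagree (posSWF sv') σ}

/-- All permutations of the positions that fix every position outside `S`. -/
def permsOn (S : Finset (Fin m)) : List (Equiv.Perm (Fin m)) :=
  (Finset.univ.filter fun π : Equiv.Perm (Fin m) => ∀ i ∉ S, π i = i).toList

/-- The `k`-shuffling of profile `σ` with respect to the set of positions `S`: each voter's
ranking is replaced by `k·m!` copies, split evenly among the `|S|!` permutations of `S`. -/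
def shuffle (S : Finset (Fin m)) (k : ℕ) (σ : Profile A m) : Profile A m :=
  σ.flatMap fun r =>
    (permsOn S).flatMap fun π =>
      List.replicate (k * Nat.factorial m / Nat.factorial S.card) (r.trans π)

/-- The positions `2,…,m` (0-indexed: `1,…,m-1`). -/
def tailPositions (m : ℕ) : Finset (Fin m) := Finset.univ.filter fun i => 1 ≤ i.val

/-- Number of voters ranking `a` first. -/
def topCount (σ : Profile A m) (a : A) : ℕ := σ.countP fun r => (r a).val == 0

/-- A weak ranking has no ties among distinct alternatives. -/
def NoTies (w : WeakRanking A) : Prop := ∀ a b : A, a ≠ b → ¬ w.tied a b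

/-- Probability (over a uniformly random split of `σ`) that the outputs of `f` on the two
sides order `a` and `b` strictly oppositely. -/
def probD [Fintype A] (f : SWF A m) (σ : Profile A m) (a b : A) : ℝ :=
  ((Finset.univ.filter fun β : Fin σ.length → Bool =>
      ((applySplit f (subProfile σ β true)).strict a b ∧
        (applySplit f (subProfile σ β false)).strict b a) ∨
      ((applySplit f (subProfile σ β true)).strict b a ∧
        (applySplit f (subProfile σ β false)).strict a b)).card : ℝ) / 2 ^ σ.length

/-- Probability (over a uniformly random split of `σ`) that `a` and `b` are tied in the
output of `f` on at least one side. -/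
def probT [Fintype A] (f : SWF A m) (σ : Profile A m) (a b : A) : ℝ :=
  ((Finset.univ.filter fun β : Fin σ.length → Bool =>
      (applySplit f (subProfile σ β true)).tied a b ∨
      (applySplit f (subProfile σ β false)).tied a b).card : ℝ) / 2 ^ σ.length

/-- A rule picking rule over sets of positional scoring vectors. -/
abbrev RPRVec (A : Type*) (m : ℕ) := Set (ScoreVec m) → Profile A m → Set (ScoreVec m)

/-- An RPR returns a nonempty subset of the candidate rules. -/
def IsRPR (Z : RPRVec A m) : Prop := ∀ F σ, Z F σ ⊆ F ∧ (Z F σ).Nonempty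

/-- Anonymity of an RPR: invariance under permuting voters. -/
def AnonymousRPR (Z : RPRVec A m) : Prop :=
  ∀ (F : Set (ScoreVec m)) (σ σ' : Profile A m), σ.Perm σ' → Z F σ = Z F σ'

/-- Reversal symmetry of an RPR. -/
def ReversalSymmetric (Z : RPRVec A m) : Prop :=
  ∀ F : Set (ScoreVec m), ScoreVec.revVec '' F = F →
    ∀ σ : Profile A m, ScoreVec.revVec '' (Z F σ) = Z F (revProfile σ)

/-- Plurality-shuffling consistency of an RPR. -/
def PSConsistent (hm : 2 ≤ m) (Z : RPRVec A m) : Prop :=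
  ∀ F : Set (ScoreVec m), F.Finite → pluralityVec m hm ∈ F →
    ∀ σ : Profile A m, NoTies (posSWF (pluralityVec m hm) σ) →
      ∃ k : ℕ, 1 ≤ k ∧ ∀ k', k ≤ k' →
        Z F (shuffle (tailPositions m) k' σ) = {pluralityVec m hm}

/-- Union consistency of an RPR. -/
def UnionConsistent (Z : RPRVec A m) : Prop :=
  ∀ (F : Set (ScoreVec m)) (σa σb : Profile A m), (Z F σa ∩ Z F σb).Nonempty →
    Z F (σa ++ σb) = Z F σa ∩ Z F σb

/-- The welfare-maximizing RPR with utility function `u`. -/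
def welfareMax (u : Ranking A m → WeakRanking A → ℝ) : RPRVec A m := fun F σ =>
  {sv | sv ∈ F ∧ ∀ sv' ∈ F,
      (σ.map fun r => u r (posSWF sv' σ)).sum ≤ (σ.map fun r => u r (posSWF sv σ)).sum}

/-- The SWF induced by a (vector-valued) RPR, where it is singleton-valued. -/
def inducedVec (Z : RPRVec A m) (F : Set (ScoreVec m)) : SWF A m := fun σ =>
  if h : ∃ sv, Z F σ = {sv} then posSWF h.choose σ else WeakRanking.allTied A

/-- The SWF induced by an (SWF-valued) RPR, where it is singleton-valued. -/
def inducedSWF (Z : Set (SWF A m) → Profile A m → Set (SWF A m)) (F : Set (SWF A m)) :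
    SWF A m := fun σ =>
  if h : ∃ f, Z F σ = {f} then h.choose σ else WeakRanking.allTied A

/-- The SWF induced by AbC over scoring vectors. -/
def inducedAbCVec [Fintype A] (F : Set (ScoreVec m)) : SWF A m := fun σ =>
  if h : ∃ sv, AbCVec F σ = {sv} then posSWF h.choose σ else WeakRanking.allTied A

/-- Anonymity of an SWF. -/
def AnonymousSWF (f : SWF A m) : Prop :=
  ∀ σ σ' : Profile A m, σ.Perm σ' → f σ = f σ'

/-- Relabeling of a weak ranking along a permutation of the alternatives. -/
def permuteWeak (π : Equiv.Perm A) (w : WeakRanking A) : WeakRanking A where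
  ge a b := w.ge (π.symm a) (π.symm b)
  total a b := w.total _ _
  trans _ _ _ h1 h2 := w.trans _ _ _ h1 h2

/-- Neutrality of an SWF: permuting the alternatives permutes the output accordingly. -/
def NeutralSWF (f : SWF A m) : Prop :=
  ∀ (π : Equiv.Perm A) (σ : Profile A m),
    f (σ.map fun r => π.symm.trans r) = permuteWeak π (f σ)

/-- `a` pairwise defeats `b` in profile `σ`. -/
def pairwiseDefeats (σ : Profile A m) (a b : A) : Prop :=
  (σ.countP fun r => decide (r b < r a)) < (σ.countP fun r => decide (r a < r b))

/-- A set `S` is dominant if every member pairwise defeats every non-member. -/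
def DominantSet [Fintype A] (σ : Profile A m) (S : Finset A) : Prop :=
  ∀ a ∈ S, ∀ b ∉ S, pairwiseDefeats σ a b

/-- The Smith set: the smallest dominant set (the intersection of all dominant sets). -/
def SmithSet [Fintype A] (σ : Profile A m) : Finset A :=
  Finset.univ.filter fun a => ∀ S : Finset A, DominantSet σ S → a ∈ S

/-- `a` is among the top-ranked alternatives of `w`. -/
def isTop (w : WeakRanking A) (a : A) : Prop := ∀ b, w.ge a b

def SmithCriterion [Fintype A] (f : SWF A m) : Prop :=
  ∀ (σ : Profile A m) (a : A), isTop (f σ) a → a ∈ SmithSet σ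

def CondorcetConsistent [Fintype A] (f : SWF A m) : Prop :=
  ∀ (σ : Profile A m) (c : A), SmithSet σ = {c} →
    ∀ a, isTop (f σ) a → a ∈ SmithSet σ

def MajorityWinnerCriterion [Fintype A] (f : SWF A m) : Prop :=
  ∀ (σ : Profile A m) (c : A), SmithSet σ = {c} → σ.length < 2 * topCount σ c →
    ∀ a, isTop (f σ) a → a ∈ SmithSet σ

def PairwiseMajorityConsistent (f : SWF A m) : Prop :=
  ∀ (σ : Profile A m) (r : WeakRanking A),
    (∀ a b, r.strict a b ↔ pairwiseDefeats σ a b) → f σ = r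

def UnanimousSWF (f : SWF A m) : Prop :=
  ∀ (σ : Profile A m) (r : Ranking A m), σ ≠ [] → (∀ x ∈ σ, x = r) →
    f σ = Ranking.toWeak r

/-- Rank of `a` in weak ranking `w`: one plus the number of alternatives strictly above. -/
def rankIn [Fintype A] (w : WeakRanking A) (a : A) : ℕ :=
  1 + (Finset.univ.filter fun b => w.strict b a).card

/-- `r'` is obtained from `r` by (weakly) raising `a`, everything else unchanged. -/
def RaisesWeak (a : A) (r r' : Ranking A m) : Prop :=
  r' a ≤ r a ∧ ∀ b c : A, b ≠ a → c ≠ a → (r b < r c ↔ r' b < r' c)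

/-- Monotonicity of an SWF: raising an alternative never hurts its rank. -/
def MonotonicSWF [Fintype A] (f : SWF A m) : Prop :=
  ∀ (a : A) (σ σ' : Profile A m), List.Forall₂ (RaisesWeak a) σ σ' →
    rankIn (f σ') a ≤ rankIn (f σ) a

/-- Total score of `a` for a list of (position ↦ alternative) ballots of length `ℓ`. -/
def ballotScore [Fintype A] {ℓ : ℕ} (sv : ScoreVec ℓ) (P : List (Fin ℓ → A)) (a : A) : ℝ :=
  (P.map fun b => ∑ i : Fin ℓ, if b i = a then sv.s i else 0).sum

/-- A scoring vector achieves perfect consistency on the given split `(P1, P2)`. -/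
def PerfectConsistency [Fintype A] {ℓ : ℕ} (sv : ScoreVec ℓ)
    (P1 P2 : List (Fin ℓ → A)) : Prop :=
  ∀ a b : A, a ≠ b →
    0 < (ballotScore sv P1 a - ballotScore sv P1 b) *
        (ballotScore sv P2 a - ballotScore sv P2 b)

/-- Complete a `k`-partial ballot to a full ballot on `m` positions by placing the missing
alternatives at the bottom, in a fixed order. -/
def completeBallot [Fintype A] [LinearOrder A] {k m : ℕ} (hk : 0 < k)
    (b : Fin k → A) : Fin m → A := fun j =>
  if h : j.val < k then b ⟨j.val, h⟩
  else ((Finset.univ \ Finset.univ.image b).sort (· ≤ ·)).getD (j.val - k) (b ⟨0, hk⟩)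

/-- `k`-shuffling for (position ↦ alternative) ballots. -/
def shuffleBallots {m : ℕ} (S : Finset (Fin m)) (k : ℕ) (P : List (Fin m → A)) :
    List (Fin m → A) :=
  P.flatMap fun f =>
    (permsOn S).flatMap fun π =>
      List.replicate (k * Nat.factorial m / Nat.factorial S.card) (f ∘ π.symm)


-- Concrete setup for STATEMENT 12: alternatives `A = Fin 4` with `a = 0`, `b = 1`,
-- `c = 2`, `d = 3`; rankings are given as (alternative ↦ position) bijections.

/-- a ≻ b ≻ c ≻ d -/
def rABCD : Ranking (Fin 4) 4 := Equiv.ofBijective ![0, 1, 2, 3] (by decide)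
/-- d ≻ c ≻ a ≻ b -/
def rDCAB : Ranking (Fin 4) 4 := Equiv.ofBijective ![2, 3, 1, 0] (by decide)
/-- b ≻ a ≻ c ≻ d -/
def rBACD : Ranking (Fin 4) 4 := Equiv.ofBijective ![1, 0, 2, 3] (by decide)
/-- c ≻ a ≻ b ≻ d -/
def rCABD : Ranking (Fin 4) 4 := Equiv.ofBijective ![1, 2, 0, 3] (by decide)
/-- d ≻ b ≻ a ≻ c -/
def rDBAC : Ranking (Fin 4) 4 := Equiv.ofBijective ![2, 1, 3, 0] (by decide)
/-- d ≻ c ≻ b ≻ a -/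
def rDCBA : Ranking (Fin 4) 4 := Equiv.ofBijective ![3, 2, 1, 0] (by decide)

/-- The candidate set `F = {f_p, f_v}`. -/
def Fpv : Set (ScoreVec 4) := {pluralityVec 4 (by norm_num), vetoVec 4 (by norm_num)}

/-- `σ`: k voters a≻b≻c≻d, 2k voters d≻c≻a≻b, k voters b≻a≻c≻d, 3k voters c≻a≻b≻d,
3k voters d≻b≻a≻c. -/
def sigmaEx (k : ℕ) : Profile (Fin 4) 4 :=
  List.replicate k rABCD ++ List.replicate k rDCAB ++ List.replicate k rDCAB ++
  List.replicate k rBACD ++ List.replicate (3 * k) rCABD ++ List.replicate (3 * k) rDBAC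

/-- `σ'`: obtained from `σ` by the k voters ranking a≻b≻c≻d and k of the voters ranking
d≻c≻a≻b each raising `b` by one position. -/
def sigmaEx' (k : ℕ) : Profile (Fin 4) 4 :=
  List.replicate k rBACD ++ List.replicate k rDCBA ++ List.replicate k rDCAB ++
  List.replicate k rBACD ++ List.replicate (3 * k) rCABD ++ List.replicate (3 * k) rDBAC

open Finset

lemma WeakRanking.ext_ge {w₁ w₂ : WeakRanking A} (h : w₁.ge = w₂.ge) : w₁ = w₂ := by
  cases w₁; cases w₂; cases h; rfl

lemma WeakRanking.strict_asymm (w : WeakRanking A) {x y : A} (h : w.strict x y) :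
    ¬ w.strict y x :=
  fun h' => h.2 h'.1

lemma WeakRanking.not_tied_of_strict (w : WeakRanking A) {x y : A} (h : w.strict x y) :
    ¬ w.tied x y :=
  fun h' => h.2 h'.2

lemma WeakRanking.tied_comm (w : WeakRanking A) (x y : A) : w.tied x y ↔ w.tied y x :=
  And.comm

namespace ScoreVec

variable (sv : ScoreVec m)

lemma s_nonneg (i : Fin m) : 0 ≤ sv.s i := by
  rw [← sv.last i.pos]
  exact sv.anti (Fin.le_def.mpr (Nat.le_sub_one_of_lt i.isLt))

lemma s_le_one (i : Fin m) : sv.s i ≤ 1 := by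
  rw [← sv.first i.pos]
  exact sv.anti (Fin.le_def.mpr (Nat.zero_le _))

lemma sq_sub_le_one (i j : Fin m) : (sv.s i - sv.s j) ^ 2 ≤ 1 := by
  nlinarith [sv.s_nonneg i, sv.s_le_one i, sv.s_nonneg j, sv.s_le_one j]

end ScoreVec

section TotalScore

variable (sv : ScoreVec m)

@[simp]
lemma totalScore_nil (x : A) : totalScore sv ([] : Profile A m) x = 0 := rfl

@[simp]
lemma totalScore_append (σ₁ σ₂ : Profile A m) (x : A) :
    totalScore sv (σ₁ ++ σ₂) x = totalScore sv σ₁ x + totalScore sv σ₂ x := by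
  simp [totalScore]

@[simp]
lemma totalScore_replicate (k : ℕ) (r : Ranking A m) (x : A) :
    totalScore sv (List.replicate k r) x = k * sv.s (r x) := by
  simp [totalScore]

lemma totalScore_eq_sum (σ : Profile A m) (x : A) :
    totalScore sv σ x = ∑ i : Fin σ.length, sv.s (σ.get i x) :=
  (Fin.sum_univ_fun_getElem σ fun r => sv.s (r x)).symm

end TotalScore

section RandomSplit

variable {n : ℕ}

def boolSign (b : Bool) : ℝ := if b then 1 else -1

def sideSum (c : Fin n → ℝ) (β : Fin n → Bool) (b : Bool) : ℝ :=
  ∑ i, if β i = b then c i else 0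

lemma sideSum_sub (c d : Fin n → ℝ) (β : Fin n → Bool) (b : Bool) :
    sideSum c β b - sideSum d β b = sideSum (c - d) β b := by
  simp only [sideSum, ← Finset.sum_sub_distrib, Pi.sub_apply]
  refine Finset.sum_congr rfl fun i _ => ?_
  split_ifs <;> simp

lemma sideSum_true_add_false (c : Fin n → ℝ) (β : Fin n → Bool) :
    sideSum c β true + sideSum c β false = ∑ i, c i := by
  simp only [sideSum, ← Finset.sum_add_distrib]
  refine Finset.sum_congr rfl fun i _ => ?_
  cases β i <;> simp

lemma sideSum_true_sub_false (c : Fin n → ℝ) (β : Fin n → Bool) :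
    sideSum c β true - sideSum c β false = ∑ i, c i * boolSign (β i) := by
  simp only [sideSum, ← Finset.sum_sub_distrib]
  refine Finset.sum_congr rfl fun i _ => ?_
  cases β i <;> simp [boolSign]

def flipAt (j : Fin n) (β : Fin n → Bool) : Fin n → Bool :=
  Function.update β j (!β j)

lemma flipAt_involutive (j : Fin n) : Function.Involutive (flipAt j) := by
  intro β
  ext i
  by_cases h : i = j
  · subst h; simp [flipAt]
  · simp [flipAt, Function.update_of_ne h]

lemma sideSum_flipAt (c : Fin n → ℝ) (j : Fin n) (β : Fin n → Bool) :
    sideSum c (flipAt j β) true = sideSum c β true + c j * boolSign (!β j) := by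
  simp only [sideSum]
  rw [← Finset.sum_erase_add _ _ (mem_univ j), ← Finset.sum_erase_add _ _ (mem_univ j),
    Finset.sum_congr rfl fun i hi => by rw [flipAt, Function.update_of_ne (ne_of_mem_erase hi)]]
  cases h : β j <;> simp [flipAt, boolSign, h, sub_eq_add_neg]

lemma sum_boolSign_mul_boolSign (i j : Fin n) :
    ∑ β : Fin n → Bool, boolSign (β i) * boolSign (β j) = if i = j then 2 ^ n else 0 := by
  split_ifs with hij
  · subst hij
    have hsq : ∀ b, boolSign b * boolSign b = 1 := by intro b; cases b <;> simp [boolSign]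
    simp [hsq]
  · have hflip : ∀ β, boolSign (flipAt j β i) * boolSign (flipAt j β j)
        = -(boolSign (β i) * boolSign (β j)) := by
      intro β
      cases h : β j <;> simp [flipAt, Function.update_of_ne hij, h, boolSign]
    have := (flipAt_involutive j).bijective.sum_comp fun β => boolSign (β i) * boolSign (β j)
    simp only [hflip, Finset.sum_neg_distrib] at this
    linarith

lemma sum_sq_sum_mul_boolSign (c : Fin n → ℝ) :
    ∑ β : Fin n → Bool, (∑ i, c i * boolSign (β i)) ^ 2 = 2 ^ n * ∑ i, c i ^ 2 := by
  have hexpand : ∀ β : Fin n → Bool, (∑ i, c i * boolSign (β i)) ^ 2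
      = ∑ i, ∑ j, c i * c j * (boolSign (β i) * boolSign (β j)) := by
    intro β
    rw [sq, Finset.sum_mul_sum]
    exact Finset.sum_congr rfl fun i _ => Finset.sum_congr rfl fun j _ => by ring
  simp_rw [hexpand]
  rw [Finset.sum_comm]
  simp_rw [Finset.sum_comm (γ := Fin n → Bool), ← Finset.mul_sum, sum_boolSign_mul_boolSign]
  simp [Finset.mul_sum, sq, mul_comm]

def SplitPreservesSign (c : Fin n → ℝ) (β : Fin n → Bool) : Prop :=
  ∀ b, 0 < (∑ i, c i) * sideSum c β b

/-- Chebyshev's inequality: on a split where some side total of `c` lacks the sign of `∑ c`, the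
signed sum `∑ c i * boolSign (β i)` is at least `|∑ c|` in absolute value. -/
lemma card_not_splitPreservesSign_mul_sq_le (c : Fin n → ℝ) :
    (#{β : Fin n → Bool | ¬ SplitPreservesSign c β} : ℝ) * (∑ i, c i) ^ 2
      ≤ 2 ^ n * ∑ i, c i ^ 2 := by
  have hbad : ∀ β : Fin n → Bool, ¬ SplitPreservesSign c β →
      (∑ i, c i) ^ 2 ≤ (∑ i, c i * boolSign (β i)) ^ 2 := by
    intro β hβ
    obtain ⟨b, hb⟩ := not_forall.mp hβ
    rw [not_lt, ← sideSum_true_add_false c β] at hb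
    rw [← sideSum_true_sub_false, ← sideSum_true_add_false c β]
    cases b <;> nlinarith [sq_nonneg (sideSum c β true), sq_nonneg (sideSum c β false)]
  rw [← sum_sq_sum_mul_boolSign, ← nsmul_eq_mul, ← Finset.sum_const]
  refine (Finset.sum_le_sum fun β hβ => hbad β (Finset.mem_filter.mp hβ).2).trans ?_
  exact Finset.sum_le_sum_of_subset_of_nonneg (Finset.filter_subset _ _)
    fun β _ _ => sq_nonneg _

/-- Flipping a voter with `c j ≠ 0` maps the splits with `sideSum = 0` injectively to splits
with `sideSum ≠ 0`. -/
lemma two_pow_le_two_mul_card_sideSum_ne_zero (c : Fin n → ℝ) {j : Fin n} (hj : c j ≠ 0) :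
    2 ^ n ≤ 2 * #{β : Fin n → Bool | sideSum c β true ≠ 0} := by
  have hle : #{β : Fin n → Bool | sideSum c β true = 0}
      ≤ #{β : Fin n → Bool | sideSum c β true ≠ 0} := by
    refine Finset.card_le_card_of_injOn (flipAt j) (fun β hβ => ?_)
      (flipAt_involutive j).injective.injOn
    simp only [coe_filter, Set.mem_ofPred_eq, mem_univ, true_and] at hβ ⊢
    rw [sideSum_flipAt, hβ, zero_add]
    cases β j <;> simp [boolSign, hj]
  have htot := Finset.card_filter_add_card_filter_not (s := (univ : Finset (Fin n → Bool)))
    (fun β => sideSum c β true = 0)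
  simp only [card_univ, Fintype.card_fun, Fintype.card_bool, Fintype.card_fin] at htot
  simp only [ne_eq] at hle ⊢
  omega

end RandomSplit

section Disagreement

def ktPair (r₁ r₂ : WeakRanking A) (x y : A) : ℝ :=
  (if (r₁.strict x y ∧ r₂.strict y x) ∨ (r₁.strict y x ∧ r₂.strict x y) then (1 : ℝ) else 0)
    + (if r₁.tied x y ∨ r₂.tied x y then (1 : ℝ) else 0) / 2

lemma KT_eq_sum_ktPair [Fintype A] (r₁ r₂ : WeakRanking A) :
    KT r₁ r₂ = (∑ p ∈ univ.offDiag, ktPair r₁ r₂ p.1 p.2) / 2 :=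
  rfl

lemma ktPair_nonneg (r₁ r₂ : WeakRanking A) (x y : A) : 0 ≤ ktPair r₁ r₂ x y := by
  unfold ktPair
  split_ifs <;> norm_num

lemma ktPair_le (r₁ r₂ : WeakRanking A) (x y : A) :
    ktPair r₁ r₂ x y ≤
      if (r₁.strict x y ∧ r₂.strict x y) ∨ (r₁.strict y x ∧ r₂.strict y x) then 0 else 3 / 2 := by
  split_ifs with hagree
  · rcases hagree with ⟨h₁, h₂⟩ | ⟨h₁, h₂⟩ <;>
      simp [ktPair, r₁.strict_asymm h₁, r₂.strict_asymm h₂, r₁.not_tied_of_strict h₁,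
        r₂.not_tied_of_strict h₂, WeakRanking.tied_comm r₁ x, WeakRanking.tied_comm r₂ x]
  · unfold ktPair
    split_ifs <;> norm_num

lemma one_le_ktPair {r₁ r₂ : WeakRanking A} {x y : A}
    (h : (r₁.strict x y ∧ r₂.strict y x) ∨ (r₁.strict y x ∧ r₂.strict x y)) :
    1 ≤ ktPair r₁ r₂ x y := by
  unfold ktPair
  rw [if_pos h]
  split_ifs <;> norm_num

lemma KT_nonneg [Fintype A] (r₁ r₂ : WeakRanking A) : 0 ≤ KT r₁ r₂ :=
  div_nonneg (Finset.sum_nonneg fun p _ => ktPair_nonneg r₁ r₂ p.1 p.2) zero_le_two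

lemma one_le_KT [Fintype A] {r₁ r₂ : WeakRanking A} {x y : A} (hxy : x ≠ y)
    (h₁ : r₁.strict x y) (h₂ : r₂.strict y x) : 1 ≤ KT r₁ r₂ := by
  have hsub : ({(x, y), (y, x)} : Finset (A × A)) ⊆ univ.offDiag := by
    simp [Finset.insert_subset_iff, hxy, hxy.symm]
  have hle := Finset.sum_le_sum_of_subset_of_nonneg hsub
    fun p _ _ => ktPair_nonneg r₁ r₂ p.1 p.2
  rw [Finset.sum_pair (by simp [hxy])] at hle
  have hpair_xy := one_le_ktPair (Or.inl ⟨h₁, h₂⟩ : (r₁.strict x y ∧ r₂.strict y x) ∨ _)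
  have hpair_yx := one_le_ktPair (Or.inr ⟨h₁, h₂⟩ : _ ∨ (r₁.strict x y ∧ r₂.strict y x))
  rw [KT_eq_sum_ktPair]
  linarith

end Disagreement

section SplitScores

lemma List.sum_map_filter {α M : Type*} [AddCommMonoid M] (l : List α) (p : α → Bool)
    (g : α → M) : ((l.filter p).map g).sum = (l.map fun a => if p a then g a else 0).sum := by
  induction l with
  | nil => rfl
  | cons a l ih => by_cases h : p a <;> simp [h, ih]

def splitOutcome (f : SWF A m) (σ : Profile A m) (β : Fin σ.length → Bool) (b : Bool) :
    WeakRanking A :=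
  applySplit f (subProfile σ β b)

lemma expDisagree_eq [Fintype A] (f : SWF A m) (σ : Profile A m) :
    expDisagree f σ = (∑ β, KT (splitOutcome f σ β true) (splitOutcome f σ β false))
      / 2 ^ σ.length :=
  rfl

lemma applySplit_posSWF_strict {sv : ScoreVec m} {σ : Profile A m} {x y : A}
    (h : totalScore sv σ y < totalScore sv σ x) : (applySplit (posSWF sv) σ).strict x y := by
  have hne : σ ≠ [] := by
    rintro rfl
    simp at h
  rw [applySplit, if_neg hne]
  exact ⟨h.le, not_le.mpr h⟩

variable (sv : ScoreVec m) (σ : Profile A m)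

def scoreGap (x y : A) (i : Fin σ.length) : ℝ := sv.s (σ.get i x) - sv.s (σ.get i y)

lemma totalScore_sub (x y : A) :
    totalScore sv σ x - totalScore sv σ y = ∑ i, scoreGap sv σ x y i := by
  simp only [totalScore_eq_sum, scoreGap, Finset.sum_sub_distrib]

lemma totalScore_subProfile (β : Fin σ.length → Bool) (b : Bool) (x : A) :
    totalScore sv (subProfile σ β b) x = sideSum (fun i => sv.s (σ.get i x)) β b := by
  rw [subProfile, totalScore, List.map_map, List.sum_map_filter, sideSum, Fin.sum_univ_def]
  simp

lemma totalScore_subProfile_sub (β : Fin σ.length → Bool) (b : Bool) (x y : A) :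
    totalScore sv (subProfile σ β b) x - totalScore sv (subProfile σ β b) y
      = sideSum (scoreGap sv σ x y) β b := by
  rw [totalScore_subProfile, totalScore_subProfile, sideSum_sub]
  rfl

end SplitScores

section Consistency

variable (sv : ScoreVec m) (σ : Profile A m)

lemma ktPair_splitOutcome_le (β : Fin σ.length → Bool) (x y : A) :
    ktPair (splitOutcome (posSWF sv) σ β true) (splitOutcome (posSWF sv) σ β false) x y
      ≤ if SplitPreservesSign (scoreGap sv σ x y) β then 0 else 3 / 2 := by
  by_cases hfaithful : SplitPreservesSign (scoreGap sv σ x y) β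
  swap
  · rw [if_neg hfaithful]
    exact (ktPair_le _ _ x y).trans (by split_ifs <;> norm_num)
  rw [if_pos hfaithful]
  refine (ktPair_le _ _ x y).trans_eq (if_pos ?_)
  have hside := fun b => totalScore_subProfile_sub sv σ β b x y
  rcases lt_trichotomy (∑ i, scoreGap sv σ x y i) 0 with hneg | hzero | hpos
  · have hlt := fun b => neg_of_mul_pos_right (hfaithful b) hneg.le
    exact Or.inr ⟨applySplit_posSWF_strict (by linarith [hside true, hlt true]),
      applySplit_posSWF_strict (by linarith [hside false, hlt false])⟩
  · simpa [hzero] using hfaithful true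
  · have hlt := fun b => pos_of_mul_pos_right (hfaithful b) hpos.le
    exact Or.inl ⟨applySplit_posSWF_strict (by linarith [hside true, hlt true]),
      applySplit_posSWF_strict (by linarith [hside false, hlt false])⟩

lemma sum_ktPair_splitOutcome_mul_sq_le (x y : A) :
    (∑ β, ktPair (splitOutcome (posSWF sv) σ β true) (splitOutcome (posSWF sv) σ β false) x y)
        * (totalScore sv σ x - totalScore sv σ y) ^ 2
      ≤ 3 / 2 * (2 ^ σ.length * σ.length) := by
  set c := scoreGap sv σ x y
  have hcount : ∑ β, ktPair (splitOutcome (posSWF sv) σ β true)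
        (splitOutcome (posSWF sv) σ β false) x y
      ≤ 3 / 2 * #{β : Fin σ.length → Bool | ¬ SplitPreservesSign c β} := by
    refine (Finset.sum_le_sum fun β _ => ktPair_splitOutcome_le sv σ β x y).trans ?_
    rw [Finset.card_filter, Nat.cast_sum, Finset.mul_sum]
    exact Finset.sum_le_sum fun β _ => by split_ifs <;> simp_all
  have hsq : ∑ i, c i ^ 2 ≤ σ.length := by
    calc ∑ i, c i ^ 2 ≤ ∑ _i : Fin σ.length, (1 : ℝ) :=
          Finset.sum_le_sum fun i _ => sv.sq_sub_le_one _ _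
      _ = σ.length := by simp
  rw [totalScore_sub]
  calc _ ≤ 3 / 2 * #{β : Fin σ.length → Bool | ¬ SplitPreservesSign c β} * (∑ i, c i) ^ 2 := by
        gcongr
    _ ≤ 3 / 2 * (2 ^ σ.length * ∑ i, c i ^ 2) := by
        rw [mul_assoc]
        exact mul_le_mul_of_nonneg_left (card_not_splitPreservesSign_mul_sq_le c) (by norm_num)
    _ ≤ 3 / 2 * (2 ^ σ.length * σ.length) := by gcongr

theorem expDisagree_posSWF_le [Fintype A] {δ : ℝ} (hδ : 0 < δ)
    (hgap : ∀ x y, x ≠ y → δ ≤ |totalScore sv σ x - totalScore sv σ y|) :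
    expDisagree (posSWF sv) σ ≤ 3 / 4 * Fintype.card A ^ 2 * σ.length / δ ^ 2 := by
  set n := σ.length
  have hpair : ∀ p ∈ (univ.offDiag : Finset (A × A)),
      ∑ β, ktPair (splitOutcome (posSWF sv) σ β true)
        (splitOutcome (posSWF sv) σ β false) p.1 p.2 ≤ 3 / 2 * (2 ^ n * n) / δ ^ 2 := by
    intro p hp
    have hδsq : δ ^ 2 ≤ (totalScore sv σ p.1 - totalScore sv σ p.2) ^ 2 :=
      (pow_le_pow_left₀ hδ.le (hgap _ _ (mem_offDiag.mp hp).2.2) 2).trans_eq (sq_abs _)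
    rw [le_div_iff₀ (by positivity)]
    refine le_trans ?_ (sum_ktPair_splitOutcome_mul_sq_le sv σ p.1 p.2)
    gcongr
    exact Finset.sum_nonneg fun β _ => ktPair_nonneg _ _ _ _
  have hcard : (#(univ.offDiag : Finset (A × A)) : ℝ) ≤ Fintype.card A ^ 2 := by
    rw [offDiag_card, card_univ, ← sq]
    exact_mod_cast Nat.sub_le _ _
  calc expDisagree (posSWF sv) σ
      = (∑ p ∈ univ.offDiag, ∑ β, ktPair (splitOutcome (posSWF sv) σ β true)
          (splitOutcome (posSWF sv) σ β false) p.1 p.2) / 2 / 2 ^ n := by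
        simp only [expDisagree_eq, KT_eq_sum_ktPair, ← Finset.sum_div]
        rw [Finset.sum_comm]
    _ ≤ (#(univ.offDiag : Finset (A × A)) * (3 / 2 * (2 ^ n * n) / δ ^ 2)) / 2 / 2 ^ n := by
        gcongr
        simpa using Finset.sum_le_card_nsmul _ _ _ hpair
    _ ≤ (Fintype.card A ^ 2 * (3 / 2 * (2 ^ n * n) / δ ^ 2)) / 2 / 2 ^ n := by gcongr
    _ = 3 / 4 * Fintype.card A ^ 2 * n / δ ^ 2 := by field_simp; ring

theorem half_le_expDisagree_posSWF [Fintype A] {x y : A}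
    (htie : totalScore sv σ x = totalScore sv σ y)
    (hsep : ∃ r ∈ σ, sv.s (r x) ≠ sv.s (r y)) : 1 / 2 ≤ expDisagree (posSWF sv) σ := by
  obtain ⟨_, hmem, hne⟩ := hsep
  obtain ⟨j, rfl⟩ := List.get_of_mem hmem
  have hxy : x ≠ y := by rintro rfl; exact hne rfl
  set c := scoreGap sv σ x y
  have hsum : ∑ i, c i = 0 := by rw [← totalScore_sub, htie, sub_self]
  have hsplit : ∀ β, sideSum c β true ≠ 0 →
      1 ≤ KT (splitOutcome (posSWF sv) σ β true) (splitOutcome (posSWF sv) σ β false) := by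
    intro β hβ
    have htrue := totalScore_subProfile_sub sv σ β true x y
    have hfalse := totalScore_subProfile_sub sv σ β false x y
    have hopp := sideSum_true_add_false c β
    rcases hβ.lt_or_gt with hlt | hgt
    · exact one_le_KT hxy.symm (applySplit_posSWF_strict (by linarith))
        (applySplit_posSWF_strict (by linarith))
    · exact one_le_KT hxy (applySplit_posSWF_strict (by linarith))
        (applySplit_posSWF_strict (by linarith))
  have hcount : (2 : ℝ) ^ σ.length ≤ 2 * #{β : Fin σ.length → Bool | sideSum c β true ≠ 0} := by
    exact_mod_cast two_pow_le_two_mul_card_sideSum_ne_zero c (sub_ne_zero.mpr hne)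
  have hKT : (#{β : Fin σ.length → Bool | sideSum c β true ≠ 0} : ℝ)
      ≤ ∑ β, KT (splitOutcome (posSWF sv) σ β true) (splitOutcome (posSWF sv) σ β false) := by
    rw [Finset.card_filter, Nat.cast_sum]
    exact Finset.sum_le_sum fun β _ => by
      split_ifs with h
      · exact_mod_cast hsplit β h
      · exact_mod_cast KT_nonneg _ _
  rw [expDisagree_eq, le_div_iff₀ (by positivity)]
  linarith

end Consistency

section Monotonicity

lemma Ranking.card_filter_lt [Fintype A] (r : Ranking A m) (t : Fin m) :
    #{c | r c < t} = t := by
  rw [← Fin.card_Iio, ← Finset.card_map r.symm.toEmbedding]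
  congr 1
  ext c
  simp

lemma rankIn_toWeak [Fintype A] (r : Ranking A m) (a : A) : rankIn r.toWeak a = r a + 1 := by
  have hstrict : ∀ b, r.toWeak.strict b a ↔ r b < r a := fun _ => lt_iff_le_not_ge.symm
  simp only [rankIn, hstrict, r.card_filter_lt, add_comm]

lemma RaisesWeak.apply_le {a b : A} {r r' : Ranking A m} (h : RaisesWeak a r r') (hb : b ≠ a) :
    r b ≤ r' b := by
  have : Fintype A := Fintype.ofEquiv _ r.symm
  -- `r b` counts the alternatives above `b`, and those other than `a` are the same for `r'`.
  have hsplit : ∀ r : Ranking A m, (r b : ℕ)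
      = (∑ c ∈ univ.erase a, if r c < r b then 1 else 0) + if r a < r b then 1 else 0 := by
    intro r
    rw [← r.card_filter_lt, Finset.card_filter, Finset.sum_erase_add _ _ (mem_univ a)]
  have hsame : (∑ c ∈ univ.erase a, if r c < r b then 1 else 0)
      = ∑ c ∈ univ.erase a, if r' c < r' b then 1 else 0 :=
    Finset.sum_congr rfl fun c hc => if_congr (h.2 c b (ne_of_mem_erase hc) hb) rfl rfl
  have e := hsplit r
  have e' := hsplit r'
  have ha : (r' a : ℕ) ≤ r a := h.1
  have hne : (r' a : ℕ) ≠ r' b := fun h' => hb (r'.injective (Fin.ext h')).symm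
  rw [hsame] at e
  rw [Fin.le_def]
  split_ifs at e e' <;> simp only [Fin.lt_def] at * <;> omega

lemma totalScore_le_of_forall₂ (sv : ScoreVec m) {σ σ' : Profile A m} {x y : A}
    (h : List.Forall₂ (fun r r' => r x ≥ r' y) σ σ') : totalScore sv σ x ≤ totalScore sv σ' y :=
  List.Forall₂.sum_le_sum <| List.forall₂_map_left_iff.mpr <| List.forall₂_map_right_iff.mpr <|
    h.imp fun _ _ hr => sv.anti hr

theorem monotonicSWF_posSWF [Fintype A] (sv : ScoreVec m) : MonotonicSWF (posSWF sv : SWF A m) := by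
  intro a σ σ' h
  have hscore_a : totalScore sv σ a ≤ totalScore sv σ' a :=
    totalScore_le_of_forall₂ sv (h.imp fun _ _ hr => hr.1)
  have hscore_b : ∀ b ≠ a, totalScore sv σ' b ≤ totalScore sv σ b := fun b hb =>
    totalScore_le_of_forall₂ sv (h.flip.imp fun _ _ hr => RaisesWeak.apply_le hr hb)
  refine Nat.add_le_add_left (Finset.card_le_card fun b hb => ?_) 1
  simp only [mem_filter, mem_univ, true_and] at hb ⊢
  have hba : b ≠ a := by rintro rfl; exact hb.2 hb.1
  exact ⟨(hscore_a.trans hb.1).trans (hscore_b b hba),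
    fun h' => hb.2 ((hscore_b b hba).trans (h'.trans hscore_a))⟩

end Monotonicity

section AbCOverTwoRules

variable [Fintype A]

theorem expDisagree_lt_of_gap_of_tie {v w : ScoreVec m} {σ : Profile A m} {δ : ℝ} (hδ : 0 < δ)
    (hgap : ∀ x y, x ≠ y → δ ≤ |totalScore v σ x - totalScore v σ y|)
    (hlarge : 3 / 2 * Fintype.card A ^ 2 * σ.length < δ ^ 2) {x y : A}
    (htie : totalScore w σ x = totalScore w σ y) (hsep : ∃ r ∈ σ, w.s (r x) ≠ w.s (r y)) :
    expDisagree (posSWF v) σ < expDisagree (posSWF w) σ := by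
  have hsmall : 3 / 4 * Fintype.card A ^ 2 * σ.length / δ ^ 2 < 1 / 2 := by
    rw [div_lt_iff₀ (by positivity)]
    linarith
  linarith [expDisagree_posSWF_le v σ hδ hgap, half_le_expDisagree_posSWF w σ htie hsep]

lemma AbCVec_pair_of_lt {v w : ScoreVec m} {σ : Profile A m}
    (h : expDisagree (posSWF v) σ < expDisagree (posSWF w) σ) : AbCVec {v, w} σ = {v} := by
  ext u
  simp only [AbCVec, Set.mem_insert_iff, Set.mem_singleton_iff, Set.mem_ofPred_eq,
    forall_eq_or_imp, forall_eq]
  constructor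
  · rintro ⟨rfl | rfl, hle, -⟩
    · rfl
    · exact absurd hle (not_le.mpr h)
  · rintro rfl
    exact ⟨Or.inl rfl, le_rfl, h.le⟩

lemma inducedAbCVec_of_AbCVec_eq_singleton {F : Set (ScoreVec m)} {σ : Profile A m}
    {v : ScoreVec m} (h : AbCVec F σ = {v}) : inducedAbCVec F σ = posSWF v σ := by
  have hex : ∃ sv, AbCVec F σ = {sv} := ⟨v, h⟩
  rw [inducedAbCVec, dif_pos hex, Set.singleton_eq_singleton_iff.mp (hex.choose_spec.symm.trans h)]

end AbCOverTwoRules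

lemma le_abs_mul_sub_mul {k : ℝ} (hk : 0 ≤ k) {g : A → ℤ} (hg : Function.Injective g) {x y : A}
    (hxy : x ≠ y) : k ≤ |k * g x - k * g y| := by
  have hone : (1 : ℝ) ≤ |((g x - g y : ℤ) : ℝ)| := by
    exact_mod_cast Int.one_le_abs (sub_ne_zero.mpr (hg.ne hxy))
  rw [← mul_sub, abs_mul, abs_of_nonneg hk]
  push_cast at hone
  exact le_mul_of_one_le_right hk hone

lemma posSWF_eq_toWeak {sv : ScoreVec m} {σ : Profile A m} {r : Ranking A m} {k : ℝ} (hk : 0 < k)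
    {g : A → ℤ} (hs : ∀ x, totalScore sv σ x = k * g x) (hg : ∀ x y, r x < r y → g y < g x) :
    posSWF sv σ = r.toWeak := by
  refine WeakRanking.ext_ge (funext₂ fun x y => propext ?_)
  change totalScore sv σ y ≤ totalScore sv σ x ↔ r x ≤ r y
  rw [hs, hs, mul_le_mul_iff_right₀ hk, Int.cast_le]
  constructor
  · exact fun hle => not_lt.mp fun hlt => (hg y x hlt).not_ge hle
  · intro hle
    rcases hle.lt_or_eq with hlt | heq
    · exact (hg x y hlt).le
    · rw [r.injective (Fin.ext (congrArg Fin.val heq))]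

section Counterexample

lemma length_sigmaEx (k : ℕ) : (sigmaEx k).length = 10 * k := by
  simp [sigmaEx]; ring

lemma length_sigmaEx' (k : ℕ) : (sigmaEx' k).length = 10 * k := by
  simp [sigmaEx']; ring

lemma totalScore_veto_sigmaEx (k : ℕ) (x : Fin 4) :
    totalScore (vetoVec 4 (by norm_num)) (sigmaEx k) x = k * (![10, 8, 7, 5] x : ℤ) := by
  fin_cases x <;> simp [sigmaEx, vetoVec, rABCD, rDCAB, rBACD, rCABD, rDBAC] <;> ring

lemma totalScore_plurality_sigmaEx (k : ℕ) (x : Fin 4) :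
    totalScore (pluralityVec 4 (by norm_num)) (sigmaEx k) x = k * (![1, 1, 3, 5] x : ℤ) := by
  fin_cases x <;> simp [sigmaEx, pluralityVec, rABCD, rDCAB, rBACD, rCABD, rDBAC] <;> ring

lemma totalScore_veto_sigmaEx' (k : ℕ) (x : Fin 4) :
    totalScore (vetoVec 4 (by norm_num)) (sigmaEx' k) x = k * (![9, 9, 7, 5] x : ℤ) := by
  fin_cases x <;> simp [sigmaEx', vetoVec, rDCBA, rDCAB, rBACD, rCABD, rDBAC] <;> ring

lemma totalScore_plurality_sigmaEx' (k : ℕ) (x : Fin 4) :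
    totalScore (pluralityVec 4 (by norm_num)) (sigmaEx' k) x = k * (![0, 2, 3, 5] x : ℤ) := by
  fin_cases x <;> simp [sigmaEx', pluralityVec, rDCBA, rDCAB, rBACD, rCABD, rDBAC] <;> ring

-- `241 ≤ k` is what makes `3 / 2 * 4 ^ 2 * (10 * k) < k ^ 2`.
lemma AbCVec_Fpv_sigmaEx {k : ℕ} (hk : 241 ≤ k) :
    AbCVec Fpv (sigmaEx k) = {vetoVec 4 (by norm_num)} := by
  have hk' : (241 : ℝ) ≤ k := by exact_mod_cast hk
  rw [Fpv, Set.pair_comm]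
  refine AbCVec_pair_of_lt (expDisagree_lt_of_gap_of_tie (δ := k) (x := 0) (y := 1)
    (by linarith) (fun x y hxy => ?_) ?_ ?_ ⟨rABCD, ?_, ?_⟩)
  · rw [totalScore_veto_sigmaEx, totalScore_veto_sigmaEx]
    exact le_abs_mul_sub_mul (by linarith) (by decide) hxy
  · rw [length_sigmaEx, Fintype.card_fin]
    push_cast
    nlinarith
  · rw [totalScore_plurality_sigmaEx, totalScore_plurality_sigmaEx]
    rfl
  · simp [sigmaEx]
    omega
  · simp [pluralityVec, rABCD]

lemma AbCVec_Fpv_sigmaEx' {k : ℕ} (hk : 241 ≤ k) :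
    AbCVec Fpv (sigmaEx' k) = {pluralityVec 4 (by norm_num)} := by
  have hk' : (241 : ℝ) ≤ k := by exact_mod_cast hk
  refine AbCVec_pair_of_lt (expDisagree_lt_of_gap_of_tie (δ := k) (x := 0) (y := 1)
    (by linarith) (fun x y hxy => ?_) ?_ ?_ ⟨rDCBA, ?_, ?_⟩)
  · rw [totalScore_plurality_sigmaEx', totalScore_plurality_sigmaEx']
    exact le_abs_mul_sub_mul (by linarith) (by decide) hxy
  · rw [length_sigmaEx', Fintype.card_fin]
    push_cast
    nlinarith
  · rw [totalScore_veto_sigmaEx', totalScore_veto_sigmaEx']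
    rfl
  · simp [sigmaEx']
    omega
  · simp [vetoVec, rDCBA]

lemma inducedAbCVec_Fpv_sigmaEx {k : ℕ} (hk : 241 ≤ k) :
    inducedAbCVec Fpv (sigmaEx k) = rABCD.toWeak := by
  rw [inducedAbCVec_of_AbCVec_eq_singleton (AbCVec_Fpv_sigmaEx hk)]
  exact posSWF_eq_toWeak (by positivity) (totalScore_veto_sigmaEx k) (by decide)

lemma inducedAbCVec_Fpv_sigmaEx' {k : ℕ} (hk : 241 ≤ k) :
    inducedAbCVec Fpv (sigmaEx' k) = rDCBA.toWeak := by
  rw [inducedAbCVec_of_AbCVec_eq_singleton (AbCVec_Fpv_sigmaEx' hk)]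
  exact posSWF_eq_toWeak (by positivity) (totalScore_plurality_sigmaEx' k) (by decide)

lemma List.forall₂_replicate {α β : Type*} {R : α → β → Prop} {a : α} {b : β} (h : R a b)
    (k : ℕ) : List.Forall₂ R (List.replicate k a) (List.replicate k b) := by
  induction k with
  | zero => exact List.Forall₂.nil
  | succ k ih => exact List.Forall₂.cons h ih

lemma forall₂_raisesWeak_sigmaEx (k : ℕ) :
    List.Forall₂ (RaisesWeak (1 : Fin 4)) (sigmaEx k) (sigmaEx' k) := by
  refine List.rel_append (List.rel_append (List.rel_append (List.rel_append (List.rel_append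
    (List.forall₂_replicate ?_ k) (List.forall₂_replicate ?_ k)) (List.forall₂_replicate ?_ k))
    (List.forall₂_replicate ?_ k)) (List.forall₂_replicate ?_ _)) (List.forall₂_replicate ?_ _) <;>
    exact ⟨by decide, by decide⟩

end Counterexample

/-- AbC does not preserve monotonicity: there is `k₁` such that for all
`k ≥ k₁`, on `σ` AbC picks veto (output a≻b≻c≻d, rank of b is 2), while on `σ'`, obtained
by promoting `b`, AbC picks plurality (output d≻c≻b≻a, rank of b is 3); this violates
monotonicity even though plurality and veto are both monotonic. -/
theorem abC_not_preserve_monotonicity :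
    MonotonicSWF (posSWF (pluralityVec 4 (by norm_num)) : SWF (Fin 4) 4) ∧
    MonotonicSWF (posSWF (vetoVec 4 (by norm_num)) : SWF (Fin 4) 4) ∧
    (∃ k1 : ℕ, 1 ≤ k1 ∧ ∀ k, k1 ≤ k →
      List.Forall₂ (RaisesWeak (1 : Fin 4)) (sigmaEx k) (sigmaEx' k) ∧
      AbCVec Fpv (sigmaEx k) = {vetoVec 4 (by norm_num)} ∧
      inducedAbCVec Fpv (sigmaEx k) = Ranking.toWeak rABCD ∧
      AbCVec Fpv (sigmaEx' k) = {pluralityVec 4 (by norm_num)} ∧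
      inducedAbCVec Fpv (sigmaEx' k) = Ranking.toWeak rDCBA ∧
      rankIn (inducedAbCVec Fpv (sigmaEx k)) 1 = 2 ∧
      rankIn (inducedAbCVec Fpv (sigmaEx' k)) 1 = 3) ∧
    ¬ MonotonicSWF (inducedAbCVec (A := Fin 4) Fpv) := by
  have hrank : ∀ k, 241 ≤ k → rankIn (inducedAbCVec Fpv (sigmaEx k)) 1 = 2 ∧
      rankIn (inducedAbCVec Fpv (sigmaEx' k)) 1 = 3 := fun k hk => by
    rw [inducedAbCVec_Fpv_sigmaEx hk, inducedAbCVec_Fpv_sigmaEx' hk, rankIn_toWeak, rankIn_toWeak]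
    exact ⟨rfl, rfl⟩
  refine ⟨monotonicSWF_posSWF _, monotonicSWF_posSWF _, ⟨241, by norm_num, fun k hk =>
    ⟨forall₂_raisesWeak_sigmaEx k, AbCVec_Fpv_sigmaEx hk, inducedAbCVec_Fpv_sigmaEx hk,
      AbCVec_Fpv_sigmaEx' hk, inducedAbCVec_Fpv_sigmaEx' hk, hrank k hk⟩⟩, fun hmono => ?_⟩
  have h := hmono 1 _ _ (forall₂_raisesWeak_sigmaEx 241)
  rw [(hrank 241 le_rfl).1, (hrank 241 le_rfl).2] at h
  omega

end
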